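/- arXiv:1308.4942 — 2 statements merged into one kernel-verified Lean document; each statement's English description precedes it below -/
import Mathlib

section
/- Let T be a weighted tree on N ≥ 2 vertices (a connected graph whose positive-weight edges form no cycle), fix a root vertex r, and for each vertex i let depth(i) be the number of edges on the unique path from r to i. Then for any nonzero eigenvector v of the combinatorial graph Laplacian L associated with its largest eigenvalue λ_max, and for all vertices i, j: v(i)·v(j) > 0 if depth(i) and depth(j) have the same parity, and v(i)·v(j) < 0 if they have opposite parity. In particular, the set {i : v(i) ≥ 0} is exactly the set of vertices of even depth or exactly the set of vertices of odd depth. -/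
/-!
Let `c i = (-1) ^ depth i`; adjacent vertices of a tree have depths differing by one, so `c`
changes sign across every edge. For a top eigenvector `v`, the vector `c * |v|` has the same
norm and a Laplacian quadratic form at least as large, so it is a top eigenvector as well and
the comparison is an equality edge by edge: `v i * v j ≤ 0` on every edge. Reading the
eigenvalue equation of `c * |v|` at a zero of `v` shows that all neighbours vanish too, so by
connectivity `v` has no zeros. Hence `v i * v j < 0` on every edge and `c * v` has constant sign.
-/

open Matrix

noncomputable def deg {n : Type*} [Fintype n] (W : Matrix n n ℝ) (i : n) : ℝ := ∑ j, W i j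

noncomputable def lap {n : Type*} [Fintype n] [DecidableEq n] (W : Matrix n n ℝ) :
    Matrix n n ℝ :=
  Matrix.diagonal (deg W) - W

def IsConn {n : Type*} (W : Matrix n n ℝ) : Prop :=
  ∀ i j : n, Relation.ReflTransGen (fun a b => 0 < W a b) i j

def IsBipartiteWith {n : Type*} (W : Matrix n n ℝ) (V1 : Set n) : Prop :=
  ∀ i j, 0 < W i j → (i ∈ V1 ↔ j ∉ V1)

open Classical in
noncomputable def sortedEigs {n : Type*} [Fintype n] [DecidableEq n] (A : Matrix n n ℝ) :
    Fin (Fintype.card n) → ℝ :=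
  if h : A.IsHermitian then
    (fun i => h.eigenvalues ((Fintype.equivFin n).symm i)) ∘
      ⇑(Tuple.sort fun i => h.eigenvalues ((Fintype.equivFin n).symm i))
  else 0

noncomputable def kron {n : Type*} [Fintype n] [DecidableEq n] (L : Matrix n n ℝ)
    (V1 : Finset n) : Matrix ↥V1 ↥V1 ℝ :=
  L.submatrix (Subtype.val : ↥V1 → n) (Subtype.val : ↥V1 → n) -
    L.submatrix (Subtype.val : ↥V1 → n) (Subtype.val : ↥(V1ᶜ) → n) *
      (L.submatrix (Subtype.val : ↥(V1ᶜ) → n) (Subtype.val : ↥(V1ᶜ) → n))⁻¹ *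
      L.submatrix (Subtype.val : ↥(V1ᶜ) → n) (Subtype.val : ↥V1 → n)

noncomputable def wred {m : Type*} [DecidableEq m] (K : Matrix m m ℝ) : Matrix m m ℝ :=
  Matrix.of fun i j => if i = j then 0 else -K i j

section Spectrum

variable {n : Type*} [Fintype n] [DecidableEq n] {A : Matrix n n ℝ}

theorem Matrix.IsHermitian.eigenvalues_le_sortedEigs (hA : A.IsHermitian)
    {m : Fin (Fintype.card n)} (hm : (m : ℕ) + 1 = Fintype.card n) (k : n) :
    hA.eigenvalues k ≤ sortedEigs A m := by
  set g := fun i => hA.eigenvalues ((Fintype.equivFin n).symm i)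
  have hk : g (Tuple.sort g ((Tuple.sort g).symm (Fintype.equivFin n k))) = hA.eigenvalues k := by
    simp [g]
  rw [sortedEigs, dif_pos hA, ← hk]
  exact Tuple.monotone_sort g (Fin.le_def.mpr (by omega))

theorem Matrix.IsHermitian.posSemidef_smul_one_sub (hA : A.IsHermitian) {lam : ℝ}
    (h : ∀ i, hA.eigenvalues i ≤ lam) : (lam • (1 : Matrix n n ℝ) - A).PosSemidef := by
  refine posSemidef_iff_isHermitian_and_spectrum_nonneg.mpr
    ⟨(isHermitian_one.smul (IsSelfAdjoint.all lam)).sub hA, ?_⟩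
  rw [← Algebra.algebraMap_eq_smul_one, ← spectrum.singleton_sub_eq,
    hA.spectrum_real_eq_range_eigenvalues]
  rintro _ ⟨_, rfl, _, ⟨i, rfl⟩, rfl⟩
  exact sub_nonneg.mpr (h i)

theorem Matrix.PosSemidef.mulVec_eq_smul_of_le_dotProduct {lam : ℝ}
    (hA : (lam • (1 : Matrix n n ℝ) - A).PosSemidef) {x : n → ℝ}
    (hx : lam * (x ⬝ᵥ x) ≤ x ⬝ᵥ (A *ᵥ x)) : A *ᵥ x = lam • x := by
  have hquad : star x ⬝ᵥ ((lam • (1 : Matrix n n ℝ) - A) *ᵥ x) =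
      lam * (x ⬝ᵥ x) - x ⬝ᵥ (A *ᵥ x) := by
    simp [sub_mulVec, dotProduct_sub, smul_mulVec]
  have hzero := le_antisymm (by linarith) (hA.dotProduct_mulVec_nonneg x)
  rw [hA.dotProduct_mulVec_zero_iff, sub_mulVec, smul_mulVec, one_mulVec, sub_eq_zero] at hzero
  exact hzero.symm

end Spectrum

section Laplacian

variable {n : Type*} [Fintype n] [DecidableEq n]

theorem lap_mulVec_apply (W : Matrix n n ℝ) (x : n → ℝ) (i : n) :
    (lap W *ᵥ x) i = ∑ j, W i j * (x i - x j) := by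
  rw [lap, sub_mulVec, Pi.sub_apply, mulVec_diagonal]
  simp only [deg, mulVec, dotProduct, mul_sub, Finset.sum_sub_distrib, Finset.sum_mul]

theorem dotProduct_lap_mulVec (W : Matrix n n ℝ) (x : n → ℝ) :
    x ⬝ᵥ (lap W *ᵥ x) = ∑ i, ∑ j, W i j * (x i * x i - x i * x j) := by
  simp only [dotProduct, lap_mulVec_apply, Finset.mul_sum]
  exact Finset.sum_congr rfl fun i _ => Finset.sum_congr rfl fun j _ => by ring

end Laplacian

-- Loops `W i i` cancel out of `lap W`, so the signing only has to flip across edges `i ≠ j`.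
structure IsAlternatingSigning {n : Type*} (W : Matrix n n ℝ) (c : n → ℝ) : Prop where
  abs_eq_one : ∀ i, |c i| = 1
  neg_of_pos : ∀ i j, i ≠ j → 0 < W i j → c j = -c i

namespace IsAlternatingSigning

variable {n : Type*} {W : Matrix n n ℝ} {c : n → ℝ} (hc : IsAlternatingSigning W c)
  (hW : ∀ i j, 0 ≤ W i j)
include hc

theorem mul_self (i : n) : c i * c i = 1 := by
  rw [← abs_mul_self, abs_mul, hc.abs_eq_one, one_mul]

theorem signedAbs_mul_self (v : n → ℝ) (i : n) : (c * |v|) i * (c * |v|) i = v i * v i := by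
  simp only [Pi.mul_apply, Pi.abs_apply]
  linear_combination (|v i| * |v i|) * hc.mul_self i + abs_mul_abs_self (v i)

theorem dotProduct_signedAbs_self [Fintype n] (v : n → ℝ) :
    (c * |v|) ⬝ᵥ (c * |v|) = v ⬝ᵥ v :=
  Finset.sum_congr rfl fun i _ => hc.signedAbs_mul_self v i

include hW

theorem mul_signedAbs_apply {i j : n} (hij : i ≠ j) (v : n → ℝ) :
    W i j * (c * |v|) j = -(c i * (W i j * |v j|)) := by
  rcases (hW i j).eq_or_lt with h | h
  · simp [← h]
  · simp only [Pi.mul_apply, Pi.abs_apply, hc.neg_of_pos i j hij h]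
    ring

theorem mul_signedAbs_mul_of_ne {i j : n} (hij : i ≠ j) (v : n → ℝ) :
    W i j * ((c * |v|) i * (c * |v|) j) = -(W i j * |v i * v j|) := by
  rw [mul_left_comm, hc.mul_signedAbs_apply hW hij, Pi.mul_apply, Pi.abs_apply, abs_mul]
  linear_combination (-(W i j * |v i| * |v j|)) * hc.mul_self i

theorem mul_signedAbs_mul_le (v : n → ℝ) (i j : n) :
    W i j * ((c * |v|) i * (c * |v|) j) ≤ W i j * (v i * v j) := by
  by_cases hij : i = j
  · subst hij
    rw [hc.signedAbs_mul_self]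
  · rw [hc.mul_signedAbs_mul_of_ne hW hij, ← mul_neg]
    exact mul_le_mul_of_nonneg_left (neg_abs_le _) (hW i j)

variable [Fintype n] [DecidableEq n]

theorem dotProduct_lap_mulVec_le (v : n → ℝ) :
    v ⬝ᵥ (lap W *ᵥ v) ≤ (c * |v|) ⬝ᵥ (lap W *ᵥ (c * |v|)) := by
  simp only [dotProduct_lap_mulVec, mul_sub, hc.signedAbs_mul_self]
  exact Finset.sum_le_sum fun i _ => Finset.sum_le_sum fun j _ =>
    sub_le_sub_left (hc.mul_signedAbs_mul_le hW v i j) _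

theorem mul_signedAbs_mul_eq_of_dotProduct_lap_mulVec_le {v : n → ℝ}
    (h : (c * |v|) ⬝ᵥ (lap W *ᵥ (c * |v|)) ≤ v ⬝ᵥ (lap W *ᵥ v)) (i j : n) :
    W i j * ((c * |v|) i * (c * |v|) j) = W i j * (v i * v j) := by
  have hle : ∀ i j, W i j * (v i * v i) - W i j * (v i * v j) ≤
      W i j * (v i * v i) - W i j * ((c * |v|) i * (c * |v|) j) := fun i j =>
    sub_le_sub_left (hc.mul_signedAbs_mul_le hW v i j) _
  have hsum := le_antisymm (hc.dotProduct_lap_mulVec_le hW v) h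
  simp only [dotProduct_lap_mulVec, mul_sub, hc.signedAbs_mul_self] at hsum
  have hrow := (Finset.sum_eq_sum_iff_of_le fun i _ => Finset.sum_le_sum fun j _ => hle i j).mp
    hsum i (Finset.mem_univ i)
  have := (Finset.sum_eq_sum_iff_of_le fun j _ => hle i j).mp hrow j (Finset.mem_univ j)
  linarith

variable {lam : ℝ} (hps : (lam • (1 : Matrix n n ℝ) - lap W).PosSemidef) {v : n → ℝ}
  (hv : lap W *ᵥ v = lam • v)
include hps hv

theorem lap_mulVec_signedAbs : lap W *ᵥ (c * |v|) = lam • (c * |v|) :=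
  hps.mulVec_eq_smul_of_le_dotProduct <| by
    rw [hc.dotProduct_signedAbs_self, ← smul_eq_mul, ← dotProduct_smul, ← hv]
    exact hc.dotProduct_lap_mulVec_le hW v

theorem mul_nonpos_of_pos {i j : n} (hij : i ≠ j) (hWij : 0 < W i j) : v i * v j ≤ 0 := by
  have hquad : (c * |v|) ⬝ᵥ (lap W *ᵥ (c * |v|)) ≤ v ⬝ᵥ (lap W *ᵥ v) := by
    rw [hc.lap_mulVec_signedAbs hW hps hv, hv, dotProduct_smul, dotProduct_smul,
      hc.dotProduct_signedAbs_self]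
  have := hc.mul_signedAbs_mul_eq_of_dotProduct_lap_mulVec_le hW hquad i j
  rw [hc.mul_signedAbs_mul_of_ne hW hij, ← mul_neg] at this
  have := mul_left_cancel₀ hWij.ne' this
  linarith [neg_abs_le (v i * v j), le_abs_self (v i * v j)]

theorem apply_eq_zero_of_pos {a b : n} (ha : v a = 0) (hWab : 0 < W a b) : v b = 0 := by
  have hw : (c * |v|) a = 0 := by simp [ha]
  have hrow := lap_mulVec_apply W (c * |v|) a
  rw [hc.lap_mulVec_signedAbs hW hps hv, Pi.smul_apply, hw, smul_zero] at hrow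
  have hterm : ∀ j, W a j * (0 - (c * |v|) j) = c a * (W a j * |v j|) := by
    intro j
    rcases eq_or_ne a j with rfl | haj
    · simp [ha]
    · rw [mul_sub, mul_zero, zero_sub, hc.mul_signedAbs_apply hW haj, neg_neg]
  rw [Finset.sum_congr rfl fun j _ => hterm j, ← Finset.mul_sum] at hrow
  have hca : c a ≠ 0 := fun h => by simpa [h] using hc.abs_eq_one a
  have hsum := (mul_eq_zero.mp hrow.symm).resolve_left hca
  have hb := (Finset.sum_eq_zero_iff_of_nonneg fun j _ => mul_nonneg (hW a j) (abs_nonneg _)).mp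
    hsum b (Finset.mem_univ b)
  exact abs_eq_zero.mp ((mul_eq_zero.mp hb).resolve_left hWab.ne')

theorem signed_mul_pos_of_pos {a b : n} (hab : a ≠ b) (hWab : 0 < W a b) (ha : v a ≠ 0)
    (hb : v b ≠ 0) : 0 < c a * v a * (c b * v b) := by
  have hneg : v a * v b < 0 :=
    (hc.mul_nonpos_of_pos hW hps hv hab hWab).lt_of_ne (mul_ne_zero ha hb)
  rw [hc.neg_of_pos a b hab hWab]
  linear_combination hneg + (v a * v b) * hc.mul_self a

end IsAlternatingSigning

namespace SimpleGraph

variable {V : Type*} {G : SimpleGraph V}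

theorem Reachable.of_forall_adj_imp {P : V → Prop} (hP : ∀ a b, G.Adj a b → P a → P b)
    {a b : V} (h : G.Reachable a b) (ha : P a) : P b := by
  obtain ⟨p⟩ := h
  induction p with
  | nil => exact ha
  | cons hadj _ ih => exact ih (hP _ _ hadj ha)

theorem Preconnected.mul_pos_of_adj (hG : G.Preconnected) {f : V → ℝ} (hf : ∀ i, f i ≠ 0)
    (hadj : ∀ a b, G.Adj a b → 0 < f a * f b) (i j : V) : 0 < f i * f j :=
  (hG i j).of_forall_adj_imp (P := fun j => 0 < f i * f j)
    (fun a b hab hia => pos_of_mul_pos_right (a := f a * f a)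
      (by convert mul_pos hia (hadj a b hab) using 1; ring) (mul_self_nonneg _))
    (mul_self_pos.mpr (hf i))

theorem fromRel_pos_adj_iff {n : Type*} {W : Matrix n n ℝ} (hW : W.IsSymm) {a b : n} :
    (fromRel fun a b => 0 < W a b).Adj a b ↔ a ≠ b ∧ 0 < W a b := by
  rw [fromRel_adj, hW.apply b a, or_self]

theorem IsTree.isAlternatingSigning_neg_one_pow_dist {n : Type*} {W : Matrix n n ℝ}
    (hW : W.IsSymm) (hT : (fromRel fun a b => 0 < W a b).IsTree) (r : n) :
    IsAlternatingSigning W fun i => (-1) ^ (fromRel fun a b => 0 < W a b).dist r i where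
  abs_eq_one i := by simp
  neg_of_pos i j hij hWij := by
    rcases hT.dist_eq_dist_add_one_of_adj r ((fromRel_pos_adj_iff hW).mpr ⟨hij, hWij⟩)
      with h | h <;> simp [h, pow_succ]

end SimpleGraph

section Parity

variable {ι : Type*} {d : ι → ℕ} {v : ι → ℝ}

theorem mul_eq_signed_mul_mul_neg_one_pow (i j : ι) :
    v i * v j = (-1) ^ d i * v i * ((-1) ^ d j * v j) * (-1) ^ (d i + d j) := by
  have hsq : ∀ k, ((-1 : ℝ) ^ d k) * (-1) ^ d k = 1 := fun k => by
    rw [← pow_add]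
    exact Even.neg_one_pow ⟨_, rfl⟩
  rw [pow_add]
  linear_combination (-(v i * v j) * ((-1) ^ d j * (-1) ^ d j)) * hsq i - (v i * v j) * hsq j

variable (hs : ∀ i j, 0 < (-1) ^ d i * v i * ((-1) ^ d j * v j))
include hs

theorem mul_pos_of_mod_two_eq {i j : ι} (h : d i % 2 = d j % 2) : 0 < v i * v j := by
  have heven : Even (d i + d j) := Nat.even_iff.mpr (by omega)
  rw [mul_eq_signed_mul_mul_neg_one_pow (d := d), heven.neg_one_pow, mul_one]
  exact hs i j

theorem mul_neg_of_mod_two_ne {i j : ι} (h : d i % 2 ≠ d j % 2) : v i * v j < 0 := by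
  have hodd : Odd (d i + d j) := Nat.odd_iff.mpr (by omega)
  rw [mul_eq_signed_mul_mul_neg_one_pow (d := d), hodd.neg_one_pow, mul_neg_one, neg_neg_iff_pos]
  exact hs i j

theorem setOf_nonneg_eq_even_or_odd {r : ι} (hr : d r = 0) :
    {i | 0 ≤ v i} = {i | Even (d i)} ∨ {i | 0 ≤ v i} = {i | Odd (d i)} := by
  rcases (mul_self_pos.mp (mul_pos_of_mod_two_eq hs (rfl : d r % 2 = d r % 2))).lt_or_gt
    with hneg | hpos
  · right
    ext i
    simp only [Set.mem_ofPred_eq, Nat.odd_iff]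
    constructor
    · intro hvi
      by_contra hpar
      nlinarith [mul_pos_of_mod_two_eq hs (i := i) (j := r) (by omega)]
    · intro hpar
      nlinarith [mul_neg_of_mod_two_ne hs (i := i) (j := r) (by omega)]
  · left
    ext i
    simp only [Set.mem_ofPred_eq, Nat.even_iff]
    constructor
    · intro hvi
      by_contra hpar
      nlinarith [mul_neg_of_mod_two_ne hs (i := i) (j := r) (by omega)]
    · intro hpar
      nlinarith [mul_pos_of_mod_two_eq hs (i := i) (j := r) (by omega)]

end Parity

/-- For a weighted tree on `N ≥ 2` vertices rooted at `r`, any nonzero eigenvector `v`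
of the Laplacian for the largest eigenvalue satisfies `v i * v j > 0` when the depths
of `i` and `j` have the same parity and `v i * v j < 0` otherwise; in particular
`{i : v i ≥ 0}` is exactly the even-depth vertices or exactly the odd-depth vertices. -/
theorem largest_laplacian_eigenvector_polarity_of_tree
    {N : ℕ} (hN : 2 ≤ N) (W : Matrix (Fin N) (Fin N) ℝ)
    (hsymm : W.IsSymm) (hnonneg : ∀ i j, 0 ≤ W i j)
    (htree : (SimpleGraph.fromRel fun a b => 0 < W a b).IsTree)
    (r : Fin N) (v : Fin N → ℝ) (hv : v ≠ 0)
    (heig : lap W *ᵥ v =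
      sortedEigs (lap W) ⟨N - 1, by simp only [Fintype.card_fin]; omega⟩ • v) :
    (∀ i j, (SimpleGraph.fromRel fun a b => 0 < W a b).dist r i % 2 =
        (SimpleGraph.fromRel fun a b => 0 < W a b).dist r j % 2 → 0 < v i * v j) ∧
    (∀ i j, (SimpleGraph.fromRel fun a b => 0 < W a b).dist r i % 2 ≠
        (SimpleGraph.fromRel fun a b => 0 < W a b).dist r j % 2 → v i * v j < 0) ∧
    ({i | 0 ≤ v i} = {i | Even ((SimpleGraph.fromRel fun a b => 0 < W a b).dist r i)} ∨
      {i | 0 ≤ v i} = {i | Odd ((SimpleGraph.fromRel fun a b => 0 < W a b).dist r i)}) := by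
  have hL : (lap W).IsHermitian := isHermitian_iff_isSymm.mpr ((isSymm_diagonal _).sub hsymm)
  have hps := hL.posSemidef_smul_one_sub <| hL.eigenvalues_le_sortedEigs
    (m := ⟨N - 1, by simp only [Fintype.card_fin]; omega⟩)
    (by simp only [Fintype.card_fin]; omega)
  have hc := htree.isAlternatingSigning_neg_one_pow_dist hsymm r
  have hconn := htree.connected.preconnected
  have hadj {a b : Fin N} := (SimpleGraph.fromRel_pos_adj_iff hsymm (a := a) (b := b)).mp
  have hne : ∀ i, v i ≠ 0 := fun i hi => hv <| funext fun j =>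
    (hconn i j).of_forall_adj_imp
      (fun a b hab ha => hc.apply_eq_zero_of_pos hnonneg hps heig ha (hadj hab).2) hi
  have hs := hconn.mul_pos_of_adj (fun i => mul_ne_zero (pow_ne_zero _ (by norm_num)) (hne i))
    fun a b hab => hc.signed_mul_pos_of_pos hnonneg hps heig (hadj hab).1 (hadj hab).2
      (hne a) (hne b)
  exact ⟨fun i j => mul_pos_of_mod_two_eq hs, fun i j => mul_neg_of_mod_two_ne hs,
    setOf_nonneg_eq_even_or_odd hs SimpleGraph.dist_self⟩
end

section
/- Let L be the combinatorial graph Laplacian of a connected weighted graph on vertex set V, let V_1 ⊊ V with V_1 and V_1^c nonempty and |V_1| ≥ 2, and let W^red be the reduced weights given by W^red_{ij} = −K(L,V_1)_{ij} for i ≠ j. Then the reduced weighted graph on V_1 is connected: any two vertices of V_1 are joined by a path of edges with positive reduced weight (equivalently, the second-smallest eigenvalue of K(L,V_1) is strictly positive). -/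
open Matrix

/-!
Write `C = V1ᶜ`. For `i ≠ j` in `V1` the Schur complement gives the reduced weight
`W i j + (W_{V1,C} L_CC⁻¹ W_{C,V1}) i j`. As `W` is connected and `V1 ≠ ∅`, the block `L_CC` is
positive definite; being also a Z-matrix, its inverse is entrywise nonnegative, and
`(L_CC⁻¹) c d > 0` whenever `c` and `d` are joined inside `C`. So `i` and `j` get a positive reduced
weight as soon as they are joined by an edge or by a path whose interior lies in `C`, and every
path of `W` between two vertices of `V1` splits into such pieces.
-/

open Function Relation

section Extend

variable {m n R : Type*} [Fintype m] [Fintype n] [CommSemiring R] {e : m → n}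

lemma dotProduct_extend_zero (he : Injective e) (v : n → R) (x : m → R) :
    v ⬝ᵥ extend e x 0 = v ∘ e ⬝ᵥ x :=
  (Fintype.sum_of_injective e he _ _
    (fun b hb => by simp [extend_apply' _ _ _ hb])
    (fun a => by simp [he.extend_apply])).symm

lemma Matrix.submatrix_mulVec_eq_comp (A : Matrix n n R) (he : Injective e) (x : m → R) :
    A.submatrix e e *ᵥ x = (A *ᵥ extend e x 0) ∘ e := by
  ext a
  exact (dotProduct_extend_zero he _ x).symm

lemma Matrix.dotProduct_submatrix_mulVec (A : Matrix n n R) (he : Injective e) (x : m → R) :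
    x ⬝ᵥ A.submatrix e e *ᵥ x = extend e x 0 ⬝ᵥ A *ᵥ extend e x 0 := by
  rw [A.submatrix_mulVec_eq_comp he, dotProduct_comm, ← dotProduct_extend_zero he,
    dotProduct_comm]

end Extend

section Laplacian

variable {n : Type*} [Fintype n] [DecidableEq n] {W : Matrix n n ℝ}

lemma lap_apply_of_ne (W : Matrix n n ℝ) {i j : n} (h : i ≠ j) : lap W i j = -W i j := by
  simp [lap, diagonal_apply_ne _ h]

lemma lap_submatrix_of_ne {m m' : Type*} (W : Matrix n n ℝ) {f : m → n} {g : m' → n}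
    (h : ∀ a b, f a ≠ g b) : (lap W).submatrix f g = -W.submatrix f g := by
  ext a b
  exact lap_apply_of_ne W (h a b)

lemma isHermitian_lap (hW : W.IsSymm) : (lap W).IsHermitian :=
  (isHermitian_diagonal _).sub (isHermitian_iff_isSymm.mpr hW)

lemma two_mul_dotProduct_lap_mulVec (hW : W.IsSymm) (y : n → ℝ) :
    2 * (y ⬝ᵥ lap W *ᵥ y) = ∑ i, ∑ j, W i j * (y i - y j) ^ 2 := by
  have hleft : y ⬝ᵥ lap W *ᵥ y = ∑ i, ∑ j, W i j * (y i ^ 2 - y i * y j) := by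
    refine Finset.sum_congr rfl fun i _ => ?_
    rw [lap, sub_mulVec, Pi.sub_apply, mulVec_diagonal, deg, Finset.sum_mul, mulVec, dotProduct,
      ← Finset.sum_sub_distrib, Finset.mul_sum]
    exact Finset.sum_congr rfl fun j _ => by ring
  have hright : y ⬝ᵥ lap W *ᵥ y = ∑ i, ∑ j, W i j * (y j ^ 2 - y i * y j) := by
    rw [hleft, Finset.sum_comm]
    simp only [hW.apply, mul_comm (y _) (y _)]
  nth_rewrite 1 [two_mul, hleft]
  rw [hright]
  simp only [← Finset.sum_add_distrib]
  congr! 2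
  ring

lemma dotProduct_lap_mulVec_nonneg (hW : W.IsSymm) (hnonneg : ∀ i j, 0 ≤ W i j) (y : n → ℝ) :
    0 ≤ y ⬝ᵥ lap W *ᵥ y := by
  have hsum : 0 ≤ ∑ i, ∑ j, W i j * (y i - y j) ^ 2 :=
    Finset.sum_nonneg fun i _ => Finset.sum_nonneg fun j _ => mul_nonneg (hnonneg i j) (sq_nonneg _)
  linarith [two_mul_dotProduct_lap_mulVec hW y]

lemma IsConn.eq_of_dotProduct_lap_mulVec_eq_zero (hconn : IsConn W) (hW : W.IsSymm)
    (hnonneg : ∀ i j, 0 ≤ W i j) {y : n → ℝ} (hy : y ⬝ᵥ lap W *ᵥ y = 0) (i j : n) :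
    y i = y j := by
  have hterm_nonneg : ∀ a b, 0 ≤ W a b * (y a - y b) ^ 2 := fun a b =>
    mul_nonneg (hnonneg a b) (sq_nonneg _)
  have hsum : ∑ a, ∑ b, W a b * (y a - y b) ^ 2 = 0 := by
    rw [← two_mul_dotProduct_lap_mulVec hW, hy, mul_zero]
  have hedge : ∀ a b, 0 < W a b → y a = y b := by
    intro a b hab
    have hrows :=
      (Fintype.sum_eq_zero_iff_of_nonneg fun a => Fintype.sum_nonneg (hterm_nonneg a)).mp hsum
    have hterm : W a b * (y a - y b) ^ 2 = 0 :=
      congrFun ((Fintype.sum_eq_zero_iff_of_nonneg (hterm_nonneg a)).mp (congrFun hrows a)) b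
    rw [mul_eq_zero, pow_eq_zero_iff two_ne_zero, sub_eq_zero] at hterm
    exact hterm.resolve_left hab.ne'
  induction hconn i j with
  | refl => rfl
  | tail _ hbc ih => exact ih.trans (hedge _ _ hbc)

lemma posDef_lap_submatrix {m : Type*} [Fintype m] (hconn : IsConn W) (hW : W.IsSymm)
    (hnonneg : ∀ i j, 0 ≤ W i j) {e : m → n} (he : Injective e) (hne : ¬ Surjective e) :
    ((lap W).submatrix e e).PosDef := by
  refine posDef_iff_dotProduct_mulVec.mpr ⟨(isHermitian_lap hW).submatrix e, fun x hx => ?_⟩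
  rw [star_trivial, dotProduct_submatrix_mulVec _ he]
  refine (dotProduct_lap_mulVec_nonneg hW hnonneg _).lt_of_ne' fun hzero => hx ?_
  obtain ⟨b, hb⟩ := not_forall.mp hne
  have hyb : extend e x 0 b = 0 := extend_apply' _ _ _ hb
  ext a
  rw [Pi.zero_apply, ← he.extend_apply x 0 a, ← hyb]
  exact hconn.eq_of_dotProduct_lap_mulVec_eq_zero hW hnonneg hzero _ _

end Laplacian

namespace Matrix

variable {m : Type*} [Fintype m] {M : Matrix m m ℝ}

def IsZMatrix (M : Matrix m m ℝ) : Prop := ∀ i j, i ≠ j → M i j ≤ 0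

lemma IsZMatrix.mulVec_apply_le_of_apply_eq_zero (hM : M.IsZMatrix) {x : m → ℝ} (hx : 0 ≤ x)
    {a : m} (ha : x a = 0) (b : m) : (M *ᵥ x) a ≤ M a b * x b := by
  have hterm : ∀ e, 0 ≤ -(M a e * x e) := fun e => by
    rcases eq_or_ne a e with rfl | hae
    · simp [ha]
    · exact neg_nonneg.mpr (mul_nonpos_of_nonpos_of_nonneg (hM a e hae) (hx e))
  have := Finset.single_le_sum (fun e _ => hterm e) (Finset.mem_univ b)
  rw [Finset.sum_neg_distrib] at this
  simp only [mulVec, dotProduct]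
  linarith

lemma IsZMatrix.nonneg_of_mulVec_nonneg (hM : M.IsZMatrix) (hpd : M.PosDef) {x : m → ℝ}
    (hMx : 0 ≤ M *ᵥ x) : 0 ≤ x := by
  -- the negative part `z` of `x` satisfies `z ⬝ᵥ M *ᵥ z ≤ z ⬝ᵥ M *ᵥ x ≤ 0`, hence vanishes
  set z : m → ℝ := fun e => min (x e) 0
  set p : m → ℝ := fun e => max (x e) 0
  have hxzp : x = z + p := funext fun e => by simp [z, p, min_add_max]
  have hzMx : z ⬝ᵥ M *ᵥ x ≤ 0 :=
    Finset.sum_nonpos fun e _ => mul_nonpos_of_nonpos_of_nonneg (min_le_right _ _) (hMx e)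
  have hzMp : 0 ≤ z ⬝ᵥ M *ᵥ p := by
    simp only [dotProduct, mulVec, Finset.mul_sum]
    refine Finset.sum_nonneg fun i _ => Finset.sum_nonneg fun j _ => ?_
    rcases eq_or_ne i j with rfl | hij
    · simp [z, p, mul_left_comm _ (M i i), min_mul_max]
    · rw [← mul_assoc]
      exact mul_nonneg (mul_nonneg_of_nonpos_of_nonpos (min_le_right _ _) (hM i j hij))
        (le_max_right _ _)
  have hzMz : z ⬝ᵥ M *ᵥ z ≤ 0 := by
    have : z ⬝ᵥ M *ᵥ x = z ⬝ᵥ M *ᵥ z + z ⬝ᵥ M *ᵥ p := by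
      rw [hxzp, mulVec_add, dotProduct_add]
    linarith
  have hz : z = 0 := by
    by_contra hz
    exact (hpd.dotProduct_mulVec_pos hz).not_ge (by rwa [star_trivial])
  intro e
  simpa [z] using congrFun hz e

lemma mulVec_inv_col [DecidableEq m] (hM : IsUnit M) (d : m) : M *ᵥ M⁻¹.col d = Pi.single d 1 := by
  rw [← mulVec_single_one, mulVec_mulVec, mul_nonsing_inv _ ((isUnit_iff_isUnit_det M).mp hM),
    one_mulVec]

lemma IsZMatrix.inv_apply_nonneg [DecidableEq m] (hM : M.IsZMatrix) (hpd : M.PosDef) (c d : m) :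
    0 ≤ M⁻¹ c d :=
  hM.nonneg_of_mulVec_nonneg hpd (x := M⁻¹.col d)
    (by rw [mulVec_inv_col hpd.isUnit]; exact Pi.single_nonneg.mpr zero_le_one) c

lemma IsZMatrix.inv_apply_pos_of_reflTransGen [DecidableEq m] (hM : M.IsZMatrix) (hpd : M.PosDef)
    {c d : m} (hcd : ReflTransGen (fun a b => M a b < 0) c d) : 0 < M⁻¹ c d := by
  set x := M⁻¹.col d
  have hx : ∀ e, 0 ≤ x e := fun e => hM.inv_apply_nonneg hpd e d
  have hMx : M *ᵥ x = Pi.single d 1 := mulVec_inv_col hpd.isUnit d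
  suffices 0 < x c from this
  induction hcd using Relation.ReflTransGen.head_induction_on with
  | refl =>
    refine (hx d).lt_of_ne' fun hxd => ?_
    have := hM.mulVec_apply_le_of_apply_eq_zero hx hxd d
    rw [hMx, hxd, mul_zero, Pi.single_eq_same] at this
    exact one_pos.not_ge this
  | @head a b hab _ hb =>
    refine (hx a).lt_of_ne' fun hxa => ?_
    have := hM.mulVec_apply_le_of_apply_eq_zero hx hxa b
    have hMxa : 0 ≤ (M *ᵥ x) a := by
      rw [hMx]; exact (Pi.single_nonneg.mpr zero_le_one : (0 : m → ℝ) ≤ _) a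
    linarith [mul_neg_of_neg_of_pos hab hb]

end Matrix

lemma Relation.ReflTransGen.mono_of_ne {α : Type*} {r p : α → α → Prop}
    (h : ∀ a b, a ≠ b → r a b → p a b) {a b : α} (hab : ReflTransGen r a b) : ReflTransGen p a b :=
  hab.lift' id fun a b hr =>
    (eq_or_ne a b).elim (fun he => he ▸ .refl) fun hne => .single (h a b hne hr)

section JoinedOutside

variable {α : Type*} [Fintype α] [DecidableEq α] (r : α → α → Prop) (s : Finset α)

def JoinedOutside (i j : s) : Prop :=
  r i j ∨ ∃ c d : ↥sᶜ, r i c ∧ ReflTransGen (fun a b : ↥sᶜ => r a b) c d ∧ r d j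

lemma reflTransGen_joinedOutside {i j : s} (h : ReflTransGen r i j) :
    ReflTransGen (JoinedOutside r s) i j := by
  suffices ∀ b, ReflTransGen r i b →
      (∀ hb : b ∈ s, ReflTransGen (JoinedOutside r s) i ⟨b, hb⟩) ∧
      (∀ hb : b ∈ sᶜ, ∃ (k : s) (c : ↥sᶜ), ReflTransGen (JoinedOutside r s) i k ∧ r k c ∧
        ReflTransGen (fun a b : ↥sᶜ => r a b) c ⟨b, hb⟩) from
    (this j h).1 j.2
  intro b hib
  induction hib with
  | refl => exact ⟨fun _ => .refl, fun hi => absurd i.2 (Finset.mem_compl.mp hi)⟩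
  | @tail a b _ hab ih =>
    by_cases ha : a ∈ s
    · exact ⟨fun _ => (ih.1 ha).tail (.inl hab),
        fun hb => ⟨⟨a, ha⟩, ⟨b, hb⟩, ih.1 ha, hab, .refl⟩⟩
    · obtain ⟨k, c, hik, hkc, hca⟩ := ih.2 (Finset.mem_compl.mpr ha)
      exact ⟨fun _ => hik.tail (.inr ⟨c, _, hkc, hca, hab⟩),
        fun _ => ⟨k, c, hik, hkc, hca.tail hab⟩⟩

end JoinedOutside

namespace Matrix

variable {l m o : Type*} [Fintype m] {A : Matrix l m ℝ} {B : Matrix m o ℝ}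

lemma mul_apply_nonneg (hA : ∀ i j, 0 ≤ A i j) (hB : ∀ i j, 0 ≤ B i j) (i : l) (k : o) :
    0 ≤ (A * B) i k :=
  Finset.sum_nonneg fun j _ => mul_nonneg (hA i j) (hB j k)

lemma mul_apply_pos (hA : ∀ i j, 0 ≤ A i j) (hB : ∀ i j, 0 ≤ B i j) {i : l} {j : m} {k : o}
    (hij : 0 < A i j) (hjk : 0 < B j k) : 0 < (A * B) i k :=
  Finset.sum_pos' (fun j _ => mul_nonneg (hA i j) (hB j k)) ⟨j, Finset.mem_univ j, mul_pos hij hjk⟩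

end Matrix

section KronReduction

variable {n : Type*} [Fintype n] [DecidableEq n] {W : Matrix n n ℝ} {V1 : Finset n}

lemma wred_kron_lap_apply {i j : V1} (hij : i ≠ j) :
    wred (kron (lap W) V1) i j = W i j +
      ((W.submatrix Subtype.val Subtype.val : Matrix V1 ↥V1ᶜ ℝ) *
        ((lap W).submatrix Subtype.val Subtype.val : Matrix ↥V1ᶜ ↥V1ᶜ ℝ)⁻¹ *
        (W.submatrix Subtype.val Subtype.val : Matrix ↥V1ᶜ V1 ℝ)) i j := by
  have hdisj : ∀ (a : V1) (c : ↥V1ᶜ), a.1 ≠ c.1 := fun a c h => Finset.mem_compl.mp (h ▸ c.2) a.2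
  rw [wred, of_apply, if_neg hij, kron, lap_submatrix_of_ne W hdisj,
    lap_submatrix_of_ne W fun c a => (hdisj a c).symm]
  simp [lap_apply_of_ne W (Subtype.val_injective.ne hij), add_comm]

lemma wred_kron_lap_pos (hconn : IsConn W) (hW : W.IsSymm) (hnonneg : ∀ i j, 0 ≤ W i j)
    {i j : V1} (hij : i ≠ j) (h : JoinedOutside (fun a b => 0 < W a b) V1 i j) :
    0 < wred (kron (lap W) V1) i j := by
  set B := (lap W).submatrix (Subtype.val : ↥V1ᶜ → n) Subtype.val
  have hBpd : B.PosDef := posDef_lap_submatrix hconn hW hnonneg Subtype.val_injective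
    fun hsurj => by obtain ⟨c, hc⟩ := hsurj i; exact Finset.mem_compl.mp (hc ▸ c.2) i.2
  have hBZ : B.IsZMatrix := fun a b hab => by
    simpa [B, lap_apply_of_ne W (Subtype.val_injective.ne hab)] using hnonneg a b
  have hPB : ∀ a d, 0 ≤ (W.submatrix (Subtype.val : V1 → n) (Subtype.val : ↥V1ᶜ → n) * B⁻¹) a d :=
    mul_apply_nonneg (fun _ _ => hnonneg _ _) (hBZ.inv_apply_nonneg hBpd)
  rw [wred_kron_lap_apply hij]
  rcases h with hW | ⟨c, d, hic, hcd, hdj⟩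
  · exact add_pos_of_pos_of_nonneg hW (mul_apply_nonneg hPB (fun _ _ => hnonneg _ _) _ _)
  refine add_pos_of_nonneg_of_pos (hnonneg _ _) (mul_apply_pos hPB (fun _ _ => hnonneg _ _)
    (mul_apply_pos (fun _ _ => hnonneg _ _) (hBZ.inv_apply_nonneg hBpd) hic
      (hBZ.inv_apply_pos_of_reflTransGen hBpd ?_)) hdj)
  exact hcd.mono_of_ne fun a b hne hab => by
    simpa [B, lap_apply_of_ne W (Subtype.val_injective.ne hne)] using hab

end KronReduction

theorem kron_reduction_connected_general
    {N : ℕ} (W : Matrix (Fin N) (Fin N) ℝ)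
    (hsymm : W.IsSymm) (hnonneg : ∀ i j, 0 ≤ W i j)
    (hconn : IsConn W) (V1 : Finset (Fin N)) :
    IsConn (wred (kron (lap W) V1)) := by
  intro i j
  exact (reflTransGen_joinedOutside _ V1 (hconn i j)).mono_of_ne fun a b hne hab =>
    wred_kron_lap_pos hconn hsymm hnonneg hne hab

/-- The Kron reduction of a connected weighted graph is connected: any two kept vertices
are joined by a path of edges with positive reduced weight. -/
theorem kron_reduction_connected
    {N : ℕ} (W : Matrix (Fin N) (Fin N) ℝ)
    (hsymm : W.IsSymm) (hnonneg : ∀ i j, 0 ≤ W i j) (hdiag : ∀ i, W i i = 0)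
    (hconn : IsConn W) (V1 : Finset (Fin N)) (hcard : 2 ≤ V1.card) (h2 : V1ᶜ.Nonempty) :
    IsConn (wred (kron (lap W) V1)) :=
  kron_reduction_connected_general W hsymm hnonneg hconn V1
end
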